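/- For all k ≥ 0 and n ≥ 0, ψ^{(n)}(w_k)(n) = 1 if the binomial coefficient C(n,k) is odd, and ψ^{(n)}(w_k)(n) = 0 if C(n,k) is even. -/

import Mathlib

/-! Since `psi` is convolution with the sequence `1, 1, 0, 0, …`, its `m`-th iterate is
convolution with the `m`-th row of Pascal's triangle, read mod 2. Applied to the indicator of
`k`, the `n`-th term of the `n`-th iterate is therefore `C(n, n - k) = C(n, k)` mod 2. -/

/-- The difference operator keeping the first term: `psi w 0 = w 0`,
`psi w (n+1) = w n + w (n+1)` (in `F_2`, sum equals difference). -/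
def psi (w : ℕ → ZMod 2) : ℕ → ZMod 2
  | 0 => w 0
  | n + 1 => w n + w (n + 1)


/-- The indicator sequence of `k`. -/
def wk (k : ℕ) : ℕ → ZMod 2 := fun n => if n = k then 1 else 0

open Finset

theorem psi_iterate_apply_eq_sum_antidiagonal (w : ℕ → ZMod 2) (m n : ℕ) :
    psi^[m] w n = ∑ p ∈ antidiagonal n, (m.choose p.2 : ZMod 2) * w p.1 := by
  induction m generalizing n with
  | zero => cases n <;> simp [Nat.sum_antidiagonal_succ']
  | succ m ih =>
    rw [Function.iterate_succ_apply']
    cases n with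
    | zero => simp [psi, ih]
    | succ n =>
      simp only [psi, ih, Nat.sum_antidiagonal_succ', Nat.choose_zero_right,
        Nat.choose_succ_succ', Nat.cast_add]
      simp only [add_mul, sum_add_distrib]
      ring

theorem psi_iterate_wk_apply (m k n : ℕ) :
    psi^[m] (wk k) n = if k ≤ n then (m.choose (n - k) : ZMod 2) else 0 := by
  simp [psi_iterate_apply_eq_sum_antidiagonal, Nat.sum_antidiagonal_eq_sum_range_succ_mk, wk]

theorem ZMod.natCast_eq_ite_odd (c : ℕ) : (c : ZMod 2) = if Odd c then 1 else 0 := by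
  split_ifs with h
  · exact ZMod.natCast_eq_one_iff_odd.mpr h
  · exact ZMod.natCast_eq_zero_iff_even.mpr (Nat.not_odd_iff_even.mp h)

theorem psi_iterate_diag (k n : ℕ) :
    psi^[n] (wk k) n = if Odd (Nat.choose n k) then 1 else 0 := by
  rw [psi_iterate_wk_apply, ← ZMod.natCast_eq_ite_odd]
  split_ifs with hk
  · rw [Nat.choose_symm hk]
  · rw [Nat.choose_eq_zero_of_lt (not_le.mp hk), Nat.cast_zero]
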